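/- Let (𝔪, ε) be a nonempty signed symmetric multisegment in the good-parity setting, with initial sequence Δ₁ ⪰ … ⪰ Δ_l, and with 𝔪# nonempty. Assume e(Δ₁) = e(Δ'₁). Suppose there exists j ≥ 1 such that j < l, j < l', Δ'_{j+1} ≺ Δ_j, c(Δ_j) ≠ 0 and c(Δ_{j+1}) = 0. Then Δ'_{j+1} ⪯ Δ_{j+1}. -/

import Mathlib

/-!
In doubled coordinates write `Δ (j + 1) = ([-b, b], L)`, so that `Δ j` ends at `b + 2` and,
by `hE`, `Δ' (j + 1)` ends at `b`. If `Δ j` is labelled `≤0`, everything below it is labelled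
`≤0` and only beginnings have to be compared. Otherwise `Δ j = ([p, b + 2], ≥0)` with
`-b ≤ p`, and the maximality of `Δ (j + 1)` among the successors of `Δ j` shows: `𝔪` has no
segment `[y, b]` with `-b < y < p`; a second copy of `[-b, b]` forces `L = ≥0` unless
`p = -b`; an odd multiplicity of `[-b, b]` forces `L ≠ ≤0`. Hence `𝔪#` has no segment
`[x, b]` with `-b < x < p` either, and counting copies gives
`#𝔪#[-b, b] + (2 if L = ≤0 else 1) = #𝔪[-b, b] + (2 if p = -b else 0)`.
These facts exclude every position of `Δ' (j + 1)` strictly above `Δ (j + 1)`.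
-/

namespace AZ

/-- A segment in doubled coordinates: the pair `(a, b)` represents the segment
`[a/2, b/2]` whose endpoints lie in `(1/2)ℤ`.  Thus the end `e(Δ)` is `Δ.2 / 2`,
the beginning `b(Δ)` is `Δ.1 / 2`, `Δ` is centered iff `Δ.1 + Δ.2 = 0`, and
`c(Δ) = 1/2` iff `Δ.1 + Δ.2 = 2`. -/
abbrev Seg := ℤ × ℤ

namespace Seg

/-- Well-formedness of a segment: `a ≤ b` and `a ≡ b [ZMOD 2]`, i.e. `b - a ∈ 2ℕ`. -/
def WF (Δ : Seg) : Prop := Δ.1 ≤ Δ.2 ∧ Δ.1 % 2 = Δ.2 % 2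

/-- The dual (contragredient) segment `Δ∨ = [−b, −a]`. -/
def dual (Δ : Seg) : Seg := (-Δ.2, -Δ.1)

/-- `Δ⁻` : the segment with its end removed. -/
def trimEnd (Δ : Seg) : Seg := (Δ.1, Δ.2 - 2)

/-- `⁻Δ` : the segment with its beginning removed. -/
def trimBeg (Δ : Seg) : Seg := (Δ.1 + 2, Δ.2)

/-- `⁺Δ` : the segment with its beginning extended. -/
def extBeg (Δ : Seg) : Seg := (Δ.1 - 2, Δ.2)

/-- The order on segments: `[x₁,y₁] ≤ [x₂,y₂]` iff `x₁ < x₂`, or `x₁ = x₂` and `y₁ ≥ y₂`. -/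
def le (Δ₁ Δ₂ : Seg) : Prop := Δ₁.1 < Δ₂.1 ∨ (Δ₁.1 = Δ₂.1 ∧ Δ₂.2 ≤ Δ₁.2)

end Seg

/-- Labels `≤0`, `=0`, `≥0` for labeled segments. -/
inductive Label
  | le0 | eq0 | ge0
deriving DecidableEq

/-- Numerical index of a label, used to order the labels `≤0 < =0 < ≥0`. -/
def Label.idx : Label → ℕ
  | .le0 => 0
  | .eq0 => 1
  | .ge0 => 2

/-- A labeled segment: a segment together with a label. -/
abbrev LSeg := Seg × Label

namespace LSeg

/-- The order `⪯` on labeled segments: segments labeled `≤0` precede those labeled `=0`,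
which precede those labeled `≥0`; for equal labels `≥0` or `≤0` one compares the segments,
and for label `=0` one compares the ends. -/
def le (Λ₁ Λ₂ : LSeg) : Prop :=
  Λ₁.2.idx < Λ₂.2.idx ∨
    (Λ₁.2 = Λ₂.2 ∧
      if Λ₁.2 = Label.eq0 then Λ₁.1.2 ≤ Λ₂.1.2 else Seg.le Λ₁.1 Λ₂.1)

/-- The strict order `≺` on labeled segments. -/
def lt (Λ₁ Λ₂ : LSeg) : Prop := LSeg.le Λ₁ Λ₂ ∧ Λ₁ ≠ Λ₂

/-- The contragredient of a labeled segment: for a centered segment the label `≤0`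
becomes `≥0` and the labels `=0`, `≥0` are kept; for a non-centered segment the
label is flipped. -/
def dual (Λ : LSeg) : LSeg :=
  (Seg.dual Λ.1,
    if Λ.1.1 + Λ.1.2 = 0 then (if Λ.2 = Label.le0 then Label.ge0 else Λ.2)
    else
      match Λ.2 with
      | Label.le0 => Label.ge0
      | Label.eq0 => Label.eq0
      | Label.ge0 => Label.le0)

end LSeg

/-- The forced label of a non-centered segment. -/
def forcedLabel (Δ : Seg) : Label := if 0 < Δ.1 + Δ.2 then Label.ge0 else Label.le0

/-- The labeling `s(𝔪)` of a multisegment: each non-centered segment gets its forced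
label; a centered segment of multiplicity `m` contributes `⌊m/2⌋` copies labeled `≤0`,
`⌊m/2⌋` copies labeled `≥0`, and `m − 2⌊m/2⌋` copies labeled `=0`. -/
def smap (m : Multiset Seg) : Multiset LSeg :=
  (m.filter fun Δ => ¬ Δ.1 + Δ.2 = 0).map (fun Δ => (Δ, forcedLabel Δ)) +
    (m.toFinset.filter fun Δ => Δ.1 + Δ.2 = 0).val.bind (fun Δ =>
      Multiset.replicate (m.count Δ / 2) (Δ, Label.le0) +
        Multiset.replicate (m.count Δ / 2) (Δ, Label.ge0) +
        Multiset.replicate (m.count Δ % 2) (Δ, Label.eq0))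

/-- A labeled segment is special (the initial sequence stops there): `[0,0]` labeled
`≥0` or `=0` in the integer case; `[1/2,1/2]`, or `[−1/2,1/2]` labeled `≥0` or `=0`
with `ε([−1/2,1/2]) = −1`, in the half-integer case. -/
def Special (ε : Seg → ℤ) (Λ : LSeg) : Prop :=
  (Λ.1 = ((0 : ℤ), (0 : ℤ)) ∧ (Λ.2 = Label.ge0 ∨ Λ.2 = Label.eq0)) ∨
    Λ.1 = ((1 : ℤ), (1 : ℤ)) ∨
      (Λ.1 = ((-1 : ℤ), (1 : ℤ)) ∧ (Λ.2 = Label.ge0 ∨ Λ.2 = Label.eq0) ∧ ε (-1, 1) = -1)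

instance (ε : Seg → ℤ) (Λ : LSeg) : Decidable (Special ε Λ) := by
  unfold Special; infer_instance

/-- The condition for `next` to be a successor of `cur` in the initial sequence:
`next ≺ cur`, `e(next) = e(cur) − 1`, and opposite signs when both are centered. -/
def Succ (ε : Seg → ℤ) (cur next : LSeg) : Prop :=
  LSeg.lt next cur ∧ next.1.2 = cur.1.2 - 2 ∧
    (cur.1.1 + cur.1.2 = 0 → next.1.1 + next.1.2 = 0 → ε next.1 = - ε cur.1)

/-- `Δ 1, …, Δ l` is the initial sequence in the algorithm for `(m, ε)`:
`Δ 1` is the `⪯`-largest element of `s(m)` with maximal end; recursively,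
`Δ (j+1)` is the `⪯`-largest successor of `Δ j`; the sequence stops when the
current segment is special or no successor exists. -/
structure IsInitSeq (m : Multiset Seg) (ε : Seg → ℤ) (Δ : ℕ → LSeg) (l : ℕ) : Prop where
  one_le : 1 ≤ l
  mem : ∀ j, 1 ≤ j → j ≤ l → Δ j ∈ smap m
  first_max_end : ∀ Λ ∈ smap m, Λ.1.2 ≤ (Δ 1).1.2
  first_max : ∀ Λ ∈ smap m, Λ.1.2 = (Δ 1).1.2 → LSeg.le Λ (Δ 1)
  not_special : ∀ j, 1 ≤ j → j < l → ¬ Special ε (Δ j)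
  succ : ∀ j, 1 ≤ j → j < l → Succ ε (Δ j) (Δ (j + 1))
  succ_max : ∀ j, 1 ≤ j → j < l → ∀ Λ ∈ smap m, Succ ε (Δ j) Λ → LSeg.le Λ (Δ (j + 1))
  last : Special ε (Δ l) ∨ ∀ Λ ∈ smap m, ¬ Succ ε (Δ l) Λ

/-- The sign `ε₀`: `−1` if the sequence stopped at a special segment, `1` otherwise. -/
def eps0 (ε : Seg → ℤ) (Δ : ℕ → LSeg) (l : ℕ) : ℤ :=
  if Special ε (Δ l) then -1 else 1

/-- The number `n₀` of centered segments of `m`. -/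
def nCentered (m : Multiset Seg) : ℕ := (m.filter fun Δ => Δ.1 + Δ.2 = 0).card

/-- The sign `ε₁` of the centered segment `𝔪₁` in the case `ε₀ = −1`:
`(−1)^(n₀+1)·ε([0,0])` in the integer case, `(−1)^(n₀)` in the half-integer case. -/
def epsOne (m : Multiset Seg) (ε : Seg → ℤ) (Δ : ℕ → LSeg) : ℤ :=
  if (Δ 1).1.2 % 2 = 0 then (-1) ^ (nCentered m + 1) * ε (0, 0)
  else (-1) ^ nCentered m

/-- The signed multisegment `𝔪₁`: if `ε₀ = −1` it is the centered segment
`[−e(Δ₁), e(Δ₁)]` with sign `ε₁`; otherwise it is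
`[e(Δ_l), e(Δ₁)] + [−e(Δ₁), −e(Δ_l)]` (non-centered segments carry sign `1`). -/
def mOne (m : Multiset Seg) (ε : Seg → ℤ) (Δ : ℕ → LSeg) (l : ℕ) : Multiset (Seg × ℤ) :=
  if Special ε (Δ l) then {((-(Δ 1).1.2, (Δ 1).1.2), epsOne m ε Δ)}
  else {(((Δ l).1.2, (Δ 1).1.2), 1), ((-(Δ 1).1.2, -(Δ l).1.2), 1)}

/-- The labeled copies `Δ 1, …, Δ l` whose end gets removed. -/
def DEnd (Δ : ℕ → LSeg) (l : ℕ) : Multiset LSeg := (Finset.Icc 1 l).val.map Δ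

/-- The labeled copies (the contragredients of the `Δ j`) whose beginning gets removed. -/
def DBeg (Δ : ℕ → LSeg) (l : ℕ) : Multiset LSeg := (DEnd Δ l).map LSeg.dual

/-- The labeled copies trimmed on both sides. -/
def DBoth (Δ : ℕ → LSeg) (l : ℕ) : Multiset LSeg := DEnd Δ l ∩ DBeg Δ l

/-- The multisegment `𝔪#`: remove the ends of the `Δ j` and the beginnings of their
contragredients (one labeled copy each, both trims if the copy occurs in both lists),
keep all other copies, and discard empty segments. -/
def mHash (m : Multiset Seg) (Δ : ℕ → LSeg) (l : ℕ) : Multiset Seg :=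
  (smap m - DEnd Δ l - (DBeg Δ l - DBoth Δ l)).map Prod.fst +
    ((DBoth Δ l).map (fun Λ => ((Λ.1.1 + 2, Λ.1.2 - 2) : Seg)) +
        (DEnd Δ l - DBoth Δ l).map (fun Λ => ((Λ.1.1, Λ.1.2 - 2) : Seg)) +
        (DBeg Δ l - DBoth Δ l).map (fun Λ => ((Λ.1.1 + 2, Λ.1.2) : Seg))).filter
      fun Δ0 => Δ0.1 ≤ Δ0.2

/-- The trimmed segment `Λ_{i_j}#` obtained from `Δ j`. -/
def trimAt (Δ : ℕ → LSeg) (l : ℕ) (j : ℕ) : Seg :=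
  if Δ j ∈ DBeg Δ l then ((Δ j).1.1 + 2, (Δ j).1.2 - 2)
  else ((Δ j).1.1, (Δ j).1.2 - 2)

/-- The sign function `ε#` on (centered) segments of `𝔪#`. -/
def epsHash (m : Multiset Seg) (ε : Seg → ℤ) (Δ : ℕ → LSeg) (l : ℕ) : Seg → ℤ :=
  fun Δ0 =>
    if ∃ j ∈ Finset.Icc 1 l, ((Δ j).1.1 + (Δ j).1.2 = 0 ∧ trimAt Δ l j = Δ0) then
      eps0 ε Δ l * ε (Δ0.1 - 2, Δ0.2 + 2)
    else if ∃ j ∈ Finset.Icc 1 l,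
        ((Δ j).1.1 + (Δ j).1.2 = 2 ∧ trimAt Δ l j = Δ0 ∧ Δ0 ∉ m) then
      eps0 ε Δ l
    else if ∃ j ∈ Finset.Icc 1 l,
        ((Δ j).1.1 + (Δ j).1.2 = 2 ∧ trimAt Δ l j = Δ0 ∧ Δ0 ∈ m) then
      -(eps0 ε Δ l) * ε Δ0
    else eps0 ε Δ l * ε Δ0

/-- The good-parity duality algorithm `AD`, as a relation between the input `(m, ε)`
and the output signed multisegment: `AD(0) = 0` and
`AD(𝔪, ε) = (𝔪₁, ε₁) + AD(𝔪#, ε#)`. -/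
inductive IsAD : Multiset Seg → (Seg → ℤ) → Multiset (Seg × ℤ) → Prop
  | zero (ε : Seg → ℤ) : IsAD 0 ε 0
  | step {m : Multiset Seg} {ε : Seg → ℤ} {Δ : ℕ → LSeg} {l : ℕ} {d : Multiset (Seg × ℤ)}
      (hm : m ≠ 0) (hseq : IsInitSeq m ε Δ l)
      (hrec : IsAD (mHash m Δ l) (epsHash m ε Δ l) d) :
      IsAD m ε (mOne m ε Δ l + d)

/-- A valid signed symmetric multisegment in the good-parity setting. -/
structure GoodInput (m : Multiset Seg) (ε : Seg → ℤ) : Prop where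
  wf : ∀ Δ0 ∈ m, Seg.WF Δ0
  symm : m.map Seg.dual = m
  parity : ∀ Δ₁ ∈ m, ∀ Δ₂ ∈ m, Δ₁.2 % 2 = Δ₂.2 % 2
  sign : ∀ Δ0, ε Δ0 = 1 ∨ ε Δ0 = -1

end AZ

theorem Finset.count_map_val_eq_ite {α β : Type*} [DecidableEq β] {s : Finset α} {f : α → β}
    {k : α} (hk : k ∈ s) {b : β} (huniq : ∀ i ∈ s, f i = b → i = k) :
    (s.val.map f).count b = if f k = b then 1 else 0 := by
  rw [Multiset.count_map, ← Finset.filter_val, ← Finset.card_def]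
  split_ifs with h
  · rw [Finset.card_eq_one]
    exact ⟨k, Finset.ext fun i => by
      simp only [Finset.mem_filter, Finset.mem_singleton]
      exact ⟨fun ⟨hi, hb⟩ => huniq i hi hb.symm, fun hi => hi ▸ ⟨hk, h.symm⟩⟩⟩
  · rw [Finset.card_eq_zero, Finset.filter_eq_empty_iff]
    intro i hi hb
    exact h (huniq i hi hb.symm ▸ hb.symm)

namespace AZ

open Multiset

namespace LSeg

theorem le_refl (Λ : LSeg) : le Λ Λ := by
  refine Or.inr ⟨rfl, ?_⟩
  split_ifs
  exacts [_root_.le_refl _, Or.inr ⟨rfl, _root_.le_refl _⟩]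

theorem le_of_idx_lt {σ τ : Seg} {L₁ L₂ : Label} (h : L₁.idx < L₂.idx) :
    le (σ, L₁) (τ, L₂) :=
  Or.inl h

theorem lt_of_idx_lt {σ τ : Seg} {L₁ L₂ : Label} (h : L₁.idx < L₂.idx) :
    lt (σ, L₁) (τ, L₂) :=
  ⟨Or.inl h, fun he => (congrArg (fun Λ : LSeg => Λ.2.idx) he ▸ h).false⟩

theorem lt_of_beg_lt {σ τ : Seg} {L : Label} (hL : L ≠ .eq0) (h : σ.1 < τ.1) :
    lt (σ, L) (τ, L) :=
  ⟨Or.inr ⟨rfl, by rw [if_neg hL]; exact Or.inl h⟩, fun he => h.ne (congrArg (·.1.1) he)⟩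

theorem ge0_le_iff {σ : Seg} {Λ : LSeg} :
    le (σ, .ge0) Λ ↔ Λ.2 = .ge0 ∧ Seg.le σ Λ.1 := by
  obtain ⟨τ, L⟩ := Λ
  cases L <;> simp [le, Label.idx]

theorem label_eq_le0_of_le {Λ Λ₀ : LSeg} (h : le Λ Λ₀) (h₀ : Λ₀.2 = .le0) :
    Λ.2 = .le0 := by
  rcases h with h | ⟨h, -⟩
  · rw [h₀] at h
    cases Λ.2 <;> simp [Label.idx] at h
  · rw [h, h₀]

theorem dual_centered (b : ℤ) (L : Label) :
    dual ((-b, b), L) = ((-b, b), if L = .le0 then .ge0 else L) := by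
  simp [dual, Seg.dual]

theorem dual_ge0 {p q : ℤ} (h : p + q ≠ 0) : dual ((p, q), .ge0) = ((-q, -p), .le0) := by
  simp [dual, Seg.dual, h]

theorem count_map_fst (s : Multiset LSeg) (σ : Seg) :
    (s.map Prod.fst).count σ = s.count (σ, .le0) + s.count (σ, .eq0) + s.count (σ, .ge0) := by
  induction s using Multiset.induction_on with
  | empty => simp
  | cons Λ s ih =>
    obtain ⟨τ, L⟩ := Λ
    by_cases hτ : τ = σ
    · subst hτ
      cases L <;> simp [ih] <;> omega
    · simp [ih, Ne.symm hτ]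

theorem count_map_shift_fst (s : Multiset LSeg) (u v : ℤ) (τ : Seg) :
    (s.map fun Λ => ((Λ.1.1 + u, Λ.1.2 + v) : Seg)).count τ =
      (s.map Prod.fst).count (τ.1 - u, τ.2 - v) := by
  have hinj : Function.Injective fun σ : Seg => ((σ.1 + u, σ.2 + v) : Seg) := by
    intro σ σ' h
    simp only [Prod.mk.injEq, add_left_inj] at h
    exact Prod.ext h.1 h.2
  rw [← count_map_eq_count' _ (s.map Prod.fst) hinj, Multiset.map_map]
  simp

end LSeg

theorem forcedLabel_of_pos {σ : Seg} (h : 0 < σ.1 + σ.2) : forcedLabel σ = .ge0 := if_pos h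

theorem fst_mem_of_mem_smap {m : Multiset Seg} {Λ : LSeg} (h : Λ ∈ smap m) : Λ.1 ∈ m := by
  simp only [smap, mem_add, mem_map, mem_filter, mem_bind] at h
  rcases h with ⟨σ, ⟨hσ, -⟩, rfl⟩ | ⟨σ, hσ, hΛ⟩
  · exact hσ
  · simp only [mem_replicate] at hΛ
    have : Λ.1 = σ := by rcases hΛ with (⟨-, rfl⟩ | ⟨-, rfl⟩) | ⟨-, rfl⟩ <;> rfl
    simp_all

theorem centered_or_forced_of_mem_smap {m : Multiset Seg} {Λ : LSeg} (h : Λ ∈ smap m) :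
    Λ.1.1 + Λ.1.2 = 0 ∨ Λ.2 = forcedLabel Λ.1 := by
  simp only [smap, mem_add, mem_map, mem_filter, mem_bind] at h
  rcases h with ⟨σ, -, rfl⟩ | ⟨σ, hσ, hΛ⟩
  · exact Or.inr rfl
  · simp only [mem_replicate] at hΛ
    have : Λ.1 = σ := by rcases hΛ with (⟨-, rfl⟩ | ⟨-, rfl⟩) | ⟨-, rfl⟩ <;> rfl
    simp_all

theorem center_nonpos_of_mem_smap {m : Multiset Seg} {Λ : LSeg} (h : Λ ∈ smap m)
    (h₀ : Λ.2 = .le0) : Λ.1.1 + Λ.1.2 ≤ 0 := by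
  rcases centered_or_forced_of_mem_smap h with hc | hf
  · exact hc.le
  · rw [h₀, forcedLabel] at hf
    split_ifs at hf with hpos
    exact not_lt.1 hpos

theorem center_nonneg_of_mem_smap {m : Multiset Seg} {Λ : LSeg} (h : Λ ∈ smap m)
    (h₀ : Λ.2 = .ge0) : 0 ≤ Λ.1.1 + Λ.1.2 := by
  rcases centered_or_forced_of_mem_smap h with hc | hf
  · exact hc.ge
  · rw [h₀, forcedLabel] at hf
    split_ifs at hf with hpos
    exact hpos.le

theorem centered_of_mem_smap {m : Multiset Seg} {Λ : LSeg} (h : Λ ∈ smap m)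
    (h₀ : Λ.2 = .eq0) : Λ.1.1 + Λ.1.2 = 0 := by
  refine (centered_or_forced_of_mem_smap h).resolve_right fun hf => ?_
  rw [h₀, forcedLabel] at hf
  split_ifs at hf

theorem le_centered_of_mem_smap {m : Multiset Seg} {Λ : LSeg} (h : Λ ∈ smap m)
    (h₀ : Λ.2 = .le0) : LSeg.le Λ ((-Λ.1.2, Λ.1.2), .le0) := by
  have hc := center_nonpos_of_mem_smap h h₀
  refine Or.inr ⟨h₀, ?_⟩
  rw [h₀, if_neg (by decide)]
  simp only [Seg.le]
  omega

theorem mem_smap_of_noncentered {m : Multiset Seg} {σ : Seg} (hσ : σ ∈ m)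
    (hnc : σ.1 + σ.2 ≠ 0) : (σ, forcedLabel σ) ∈ smap m :=
  mem_add.2 (Or.inl (mem_map_of_mem _ (mem_filter.2 ⟨hσ, hnc⟩)))

theorem count_smap_centered (m : Multiset Seg) {σ : Seg} (hσ : σ.1 + σ.2 = 0) :
    (smap m).count (σ, .le0) = m.count σ / 2 ∧ (smap m).count (σ, .ge0) = m.count σ / 2 ∧
      (smap m).count (σ, .eq0) = m.count σ % 2 := by
  have hfirst : ∀ L, ((m.filter fun Δ => ¬ Δ.1 + Δ.2 = 0).map
      (fun Δ => (Δ, forcedLabel Δ))).count (σ, L) = 0 := fun L => by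
    simp only [count_eq_zero, mem_map, mem_filter, Prod.mk.injEq]
    rintro ⟨_, ⟨-, hnc⟩, rfl, -⟩
    exact hnc hσ
  have hbind : ∀ L, ((m.toFinset.filter fun Δ => Δ.1 + Δ.2 = 0).val.bind (fun Δ =>
      Multiset.replicate (m.count Δ / 2) (Δ, Label.le0) +
        Multiset.replicate (m.count Δ / 2) (Δ, Label.ge0) +
        Multiset.replicate (m.count Δ % 2) (Δ, Label.eq0))).count (σ, L) =
      (Multiset.replicate (m.count σ / 2) (σ, Label.le0) +
        Multiset.replicate (m.count σ / 2) (σ, Label.ge0) +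
        Multiset.replicate (m.count σ % 2) (σ, Label.eq0)).count (σ, L) := fun L => by
    rw [count_bind]
    change ∑ x ∈ _, _ = _
    rw [Finset.sum_eq_single σ (fun x _ hx => by simp [count_replicate, hx])]
    · intro hσm
      have : m.count σ = 0 := by simpa [hσ] using hσm
      simp [this]
  simp only [smap, count_add, hfirst, hbind, count_replicate]
  simp

variable {m : Multiset Seg} {ε : Seg → ℤ} {Δ : ℕ → LSeg} {l j : ℕ}

theorem mem_DEnd {Λ : LSeg} :
    Λ ∈ DEnd Δ l ↔ ∃ i ∈ Finset.Icc 1 l, Δ i = Λ := by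
  simp [DEnd]

theorem DBeg_eq_map (Δ : ℕ → LSeg) (l : ℕ) :
    DBeg Δ l = (Finset.Icc 1 l).val.map (fun i => LSeg.dual (Δ i)) := by
  simp only [DBeg, DEnd, Multiset.map_map, Function.comp_def]

theorem mem_DBeg {Λ : LSeg} :
    Λ ∈ DBeg Δ l ↔ ∃ i ∈ Finset.Icc 1 l, LSeg.dual (Δ i) = Λ := by
  simp [DBeg_eq_map]

theorem mem_mHash {τ : Seg} (h : τ ∈ mHash m Δ l) :
    (∃ L, (τ, L) ∈ smap m) ∨
      (∃ Λ ∈ DEnd Δ l, τ = (Λ.1.1 + 2, Λ.1.2 - 2) ∨ τ = (Λ.1.1, Λ.1.2 - 2)) ∨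
      ∃ Λ ∈ DBeg Δ l - DBoth Δ l, τ = (Λ.1.1 + 2, Λ.1.2) := by
  simp only [mHash, mem_add, mem_filter, mem_map] at h
  rcases h with ⟨Λ, hΛ, rfl⟩ |
    ⟨((⟨Λ, hΛ, rfl⟩ | ⟨Λ, hΛ, rfl⟩) | ⟨Λ, hΛ, rfl⟩), -⟩
  · exact Or.inl ⟨Λ.2,
      mem_of_le ((Multiset.sub_le_self _ _).trans (Multiset.sub_le_self _ _)) hΛ⟩
  · exact Or.inr (Or.inl ⟨Λ, (mem_inter.1 hΛ).1, Or.inl rfl⟩)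
  · exact Or.inr (Or.inl ⟨Λ, mem_of_le (Multiset.sub_le_self _ _) hΛ, Or.inr rfl⟩)
  · exact Or.inr (Or.inr ⟨Λ, hΛ, rfl⟩)

theorem count_mHash {τ : Seg} (hτ : τ.1 ≤ τ.2) :
    (mHash m Δ l).count τ =
      ((smap m - DEnd Δ l - (DBeg Δ l - DBoth Δ l)).map Prod.fst).count τ +
        ((DBoth Δ l).map Prod.fst).count (τ.1 - 2, τ.2 + 2) +
        ((DEnd Δ l - DBoth Δ l).map Prod.fst).count (τ.1, τ.2 + 2) +
        ((DBeg Δ l - DBoth Δ l).map Prod.fst).count (τ.1 - 2, τ.2) := by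
  have h1 := LSeg.count_map_shift_fst (DBoth Δ l) 2 (-2) τ
  have h2 := LSeg.count_map_shift_fst (DEnd Δ l - DBoth Δ l) 0 (-2) τ
  have h3 := LSeg.count_map_shift_fst (DBeg Δ l - DBoth Δ l) 2 0 τ
  simp only [add_zero, sub_zero, sub_neg_eq_add, ← sub_eq_add_neg] at h1 h2 h3
  rw [mHash, count_add, count_filter_of_pos (p := fun σ : Seg => σ.1 ≤ σ.2) hτ, count_add,
    count_add, h1, h2, h3]
  ring

namespace IsInitSeq

theorem end_eq (h : IsInitSeq m ε Δ l) {k : ℕ} (hk1 : 1 ≤ k) (hkl : k ≤ l) :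
    (Δ k).1.2 = (Δ 1).1.2 - 2 * ((k : ℤ) - 1) := by
  induction k, hk1 using Nat.le_induction with
  | base => ring
  | succ k hk ih =>
    rw [(h.succ k hk hkl).2.1, ih (by omega)]
    push_cast
    ring

theorem eq_of_end_eq (h : IsInitSeq m ε Δ l) {i k : ℕ} (hi : i ∈ Finset.Icc 1 l)
    (hk : k ∈ Finset.Icc 1 l) (he : (Δ i).1.2 = (Δ k).1.2) : i = k := by
  rw [Finset.mem_Icc] at hi hk
  rw [h.end_eq hi.1 hi.2, h.end_eq hk.1 hk.2] at he
  omega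

theorem count_DEnd (h : IsInitSeq m ε Δ l) {k : ℕ} (hk : k ∈ Finset.Icc 1 l) {Λ : LSeg}
    (he : Λ.1.2 = (Δ k).1.2) : (DEnd Δ l).count Λ = if Δ k = Λ then 1 else 0 :=
  Finset.count_map_val_eq_ite hk fun _ hi hΛ => h.eq_of_end_eq hi hk (hΛ ▸ he)

theorem count_DBeg (h : IsInitSeq m ε Δ l) {k : ℕ} (hk : k ∈ Finset.Icc 1 l) {Λ : LSeg}
    (hb : Λ.1.1 = -(Δ k).1.2) :
    (DBeg Δ l).count Λ = if LSeg.dual (Δ k) = Λ then 1 else 0 := by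
  rw [DBeg_eq_map]
  refine Finset.count_map_val_eq_ite hk fun i hi hΛ => h.eq_of_end_eq hi hk ?_
  have : -(Δ i).1.2 = Λ.1.1 := by rw [← hΛ]; rfl
  omega

theorem le_next_of_lt (h : IsInitSeq m ε Δ l) (hj1 : 1 ≤ j) (hjl : j < l)
    (hnc : (Δ j).1.1 + (Δ j).1.2 ≠ 0) {Λ : LSeg} (hΛ : Λ ∈ smap m)
    (hlt : LSeg.lt Λ (Δ j)) (he : Λ.1.2 = (Δ j).1.2 - 2) : LSeg.le Λ (Δ (j + 1)) :=
  h.succ_max j hj1 hjl Λ hΛ ⟨hlt, he, fun hc => absurd hc hnc⟩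

end IsInitSeq

section CenteredSuccessor

variable {p b : ℤ} {L : Label}

/-- The copies of `Δ (j + 1)` and of its dual are consumed; when `p = -b`, trimming the end of
`Δ j` and the beginning of its dual produces two new copies of `[-b, b]`. -/
theorem count_mHash_centered (hseq : IsInitSeq m ε Δ l) (hj1 : 1 ≤ j) (hjl : j < l)
    (hΔj : Δ j = ((p, b + 2), .ge0)) (hΔj1 : Δ (j + 1) = ((-b, b), L)) (hp : -b ≤ p)
    (hb : -b ≤ b) :
    (mHash m Δ l).count (-b, b) + (if L = .le0 then 2 else 1) =
      m.count (-b, b) + (if p = -b then 2 else 0) := by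
  have hk : j ∈ Finset.Icc 1 l := Finset.mem_Icc.2 ⟨hj1, hjl.le⟩
  have hk1 : j + 1 ∈ Finset.Icc 1 l := Finset.mem_Icc.2 ⟨by omega, hjl⟩
  have hE : ∀ u L', (DEnd Δ l).count ((u, b), L') = if Δ (j + 1) = ((u, b), L') then 1 else 0 :=
    fun u L' => hseq.count_DEnd hk1 (by rw [hΔj1])
  have hE2 : ∀ u L', (DEnd Δ l).count ((u, b + 2), L') =
      if Δ j = ((u, b + 2), L') then 1 else 0 :=
    fun u L' => hseq.count_DEnd hk (by rw [hΔj])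
  have hB : ∀ v L', (DBeg Δ l).count ((-b, v), L') =
      if LSeg.dual (Δ (j + 1)) = ((-b, v), L') then 1 else 0 :=
    fun v L' => hseq.count_DBeg hk1 (by rw [hΔj1])
  have hB2 : ∀ v L', (DBeg Δ l).count ((-b - 2, v), L') =
      if LSeg.dual (Δ j) = ((-b - 2, v), L') then 1 else 0 :=
    fun v L' => hseq.count_DBeg hk (by rw [hΔj]; exact (neg_add' b 2).symm)
  obtain ⟨hle0, hge0, heq0⟩ := count_smap_centered m (σ := (-b, b)) (by simp)
  have hmem := count_pos.2 (hΔj1 ▸ hseq.mem (j + 1) (by omega) hjl)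
  rw [count_mHash hb]
  simp only [LSeg.count_map_fst, count_sub, DBoth, count_inter, hE, hE2, hB,
    hB2, hΔj, hΔj1, LSeg.dual_ge0 (show p + (b + 2) ≠ 0 by omega), LSeg.dual_centered]
  rcases eq_or_ne p (-b) with rfl | hpb <;> cases L <;>
    simp only [hle0, hge0, heq0] at hmem ⊢ <;> simp <;> split_ifs <;> omega

theorem notMem_of_beg_between (hseq : IsInitSeq m ε Δ l) (hj1 : 1 ≤ j) (hjl : j < l)
    (hΔj : Δ j = ((p, b + 2), .ge0)) (hΔj1 : Δ (j + 1) = ((-b, b), L)) {y : ℤ}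
    (hby : -b < y) (hyp : y < p) : (y, b) ∉ m := by
  intro hy
  have hmem := mem_smap_of_noncentered hy (show y + b ≠ 0 by omega)
  rw [forcedLabel_of_pos (show 0 < y + b by omega)] at hmem
  have hle := hseq.le_next_of_lt hj1 hjl (by simp only [hΔj]; omega) hmem
    (hΔj ▸ LSeg.lt_of_beg_lt (by decide) hyp) (by simp only [hΔj]; omega)
  have := (LSeg.ge0_le_iff.1 (hΔj1 ▸ hle)).2
  simp only [Seg.le] at this
  omega

theorem label_eq_ge0_of_two_le_count (hseq : IsInitSeq m ε Δ l) (hj1 : 1 ≤ j) (hjl : j < l)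
    (hΔj : Δ j = ((p, b + 2), .ge0)) (hΔj1 : Δ (j + 1) = ((-b, b), L)) (hbp : -b < p)
    (hc : 2 ≤ m.count (-b, b)) : L = .ge0 := by
  have hmem : ((-b, b), Label.ge0) ∈ smap m := by
    rw [← count_pos, (count_smap_centered m (σ := (-b, b)) (by simp)).2.1]
    omega
  have hle := hseq.le_next_of_lt hj1 hjl (by simp only [hΔj]; omega) hmem
    (hΔj ▸ LSeg.lt_of_beg_lt (by decide) hbp) (by simp only [hΔj]; omega)
  exact (LSeg.ge0_le_iff.1 (hΔj1 ▸ hle)).1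

theorem label_ne_le0_of_count_odd (hseq : IsInitSeq m ε Δ l) (hj1 : 1 ≤ j) (hjl : j < l)
    (hΔj : Δ j = ((p, b + 2), .ge0)) (hΔj1 : Δ (j + 1) = ((-b, b), L)) (hp : -b ≤ p)
    (hc : m.count (-b, b) % 2 = 1) : L ≠ .le0 := by
  have hmem : ((-b, b), Label.eq0) ∈ smap m := by
    rw [← count_pos, (count_smap_centered m (σ := (-b, b)) (by simp)).2.2]
    omega
  have hle := hseq.le_next_of_lt hj1 hjl (by simp only [hΔj]; omega) hmem
    (hΔj ▸ LSeg.lt_of_idx_lt (by decide)) (by simp only [hΔj]; omega)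
  rintro rfl
  cases LSeg.label_eq_le0_of_le hle (by rw [hΔj1])

theorem beg_eq_of_label_le0 (hseq : IsInitSeq m ε Δ l) (hj1 : 1 ≤ j) (hjl : j < l)
    (hΔj : Δ j = ((p, b + 2), .ge0)) (hΔj1 : Δ (j + 1) = ((-b, b), .le0)) (hp : -b ≤ p) :
    p = -b := by
  by_contra hpb
  have hc : 2 ≤ m.count (-b, b) := by
    have := count_pos.2 (hΔj1 ▸ hseq.mem (j + 1) (by omega) hjl)
    rw [(count_smap_centered m (σ := (-b, b)) (by simp)).1] at this
    omega
  cases label_eq_ge0_of_two_le_count hseq hj1 hjl hΔj hΔj1 (by omega) hc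

theorem eq0_notMem_smap_mHash (hseq : IsInitSeq m ε Δ l) (hj1 : 1 ≤ j) (hjl : j < l)
    (hΔj : Δ j = ((p, b + 2), .ge0)) (hΔj1 : Δ (j + 1) = ((-b, b), .le0)) (hp : -b ≤ p)
    (hb : -b ≤ b) : ((-b, b), Label.eq0) ∉ smap (mHash m Δ l) := by
  have hpb := beg_eq_of_label_le0 hseq hj1 hjl hΔj hΔj1 hp
  have heven : m.count (-b, b) % 2 = 0 := by
    by_contra hodd
    exact label_ne_le0_of_count_odd hseq hj1 hjl hΔj hΔj1 hp (by omega) rfl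
  have hcount := count_mHash_centered hseq hj1 hjl hΔj hΔj1 hp hb
  rw [← count_pos, (count_smap_centered _ (σ := (-b, b)) (by simp)).2.2]
  simp only [hpb, if_true] at hcount
  omega

theorem centered_notMem_mHash (hseq : IsInitSeq m ε Δ l) (hj1 : 1 ≤ j) (hjl : j < l)
    (hΔj : Δ j = ((p, b + 2), .ge0)) (hΔj1 : Δ (j + 1) = ((-b, b), .eq0)) (hbp : -b < p)
    (hb : -b ≤ b) : (-b, b) ∉ mHash m Δ l := by
  have hodd : m.count (-b, b) % 2 = 1 := by
    have := count_pos.2 (hΔj1 ▸ hseq.mem (j + 1) (by omega) hjl)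
    rw [(count_smap_centered m (σ := (-b, b)) (by simp)).2.2] at this
    omega
  have hc : m.count (-b, b) < 2 := by
    by_contra hc
    cases label_eq_ge0_of_two_le_count hseq hj1 hjl hΔj hΔj1 hbp (by omega)
  have hcount := count_mHash_centered hseq hj1 hjl hΔj hΔj1 hbp.le hb
  rw [← count_eq_zero]
  simp only [reduceCtorEq, if_false, hbp.ne'] at hcount
  omega

theorem notMem_mHash_of_beg_between (hwf : ∀ σ ∈ m, Seg.WF σ) (hsymm : m.map Seg.dual = m)
    (hseq : IsInitSeq m ε Δ l) (hj1 : 1 ≤ j) (hjl : j < l)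
    (hΔj : Δ j = ((p, b + 2), .ge0)) (hΔj1 : Δ (j + 1) = ((-b, b), L)) (hL : L ≠ .le0)
    {x : ℤ} (hbx : -b < x) (hxp : x < p) : (x, b) ∉ mHash m Δ l := by
  have hk : j ∈ Finset.Icc 1 l := Finset.mem_Icc.2 ⟨hj1, hjl.le⟩
  have hk1 : j + 1 ∈ Finset.Icc 1 l := Finset.mem_Icc.2 ⟨by omega, hjl⟩
  intro hx
  rcases mem_mHash hx with ⟨L', hL'⟩ | ⟨Λ, hΛ, hτ⟩ | ⟨Λ, hΛ, hτ⟩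
  · exact notMem_of_beg_between hseq hj1 hjl hΔj hΔj1 hbx hxp (fst_mem_of_mem_smap hL')
  · obtain ⟨i, hi, rfl⟩ := mem_DEnd.1 hΛ
    have hij : i = j := hseq.eq_of_end_eq hi hk (by
      simp only [hΔj, Prod.ext_iff] at hτ ⊢
      omega)
    simp only [hij, hΔj, Prod.ext_iff] at hτ
    omega
  · obtain ⟨i, hi, rfl⟩ := mem_DBeg.1 (mem_of_le (Multiset.sub_le_self _ _) hΛ)
    have hdual : Seg.dual (Δ i).1 = (x - 2, b) := by
      simp only [LSeg.dual, Seg.dual, Prod.ext_iff] at hτ ⊢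
      omega
    have hdm : (x - 2, b) ∈ m := by
      rw [← hdual, ← hsymm]
      exact mem_map_of_mem _ (fst_mem_of_mem_smap (hseq.mem i (Finset.mem_Icc.1 hi).1
        (Finset.mem_Icc.1 hi).2))
    rcases lt_trichotomy (x - 2) (-b) with hlt | heq | hgt
    · have := (hwf _ hdm).2
      simp only at this
      omega
    · have hij : i = j + 1 := hseq.eq_of_end_eq hi hk1 (by
        simp only [Seg.dual, Prod.ext_iff, hΔj1] at hdual ⊢
        omega)
      have hself : LSeg.dual (Δ (j + 1)) = Δ (j + 1) := by
        rw [hΔj1, LSeg.dual_centered, if_neg hL]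
      rw [hij, hself] at hΛ
      have hB := hseq.count_DBeg hk1 (Λ := Δ (j + 1)) (by simp [hΔj1])
      have hE := hseq.count_DEnd hk1 (Λ := Δ (j + 1)) rfl
      rw [hself, if_pos rfl] at hB
      rw [if_pos rfl] at hE
      have := count_pos.2 hΛ
      rw [count_sub, DBoth, count_inter, hB, hE] at this
      omega
    · exact notMem_of_beg_between hseq hj1 hjl hΔj hΔj1 (by omega) (by omega) hdm

theorem le_next_of_lt_of_ge0 (hwf : ∀ σ ∈ m, Seg.WF σ) (hsymm : m.map Seg.dual = m)
    (hseq : IsInitSeq m ε Δ l) (hj1 : 1 ≤ j) (hjl : j < l)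
    (hΔj : Δ j = ((p, b + 2), .ge0)) (hΔj1 : Δ (j + 1) = ((-b, b), L)) (hp : -b ≤ p)
    (hb : -b ≤ b) {x : ℤ} {L' : Label} (hΛ' : ((x, b), L') ∈ smap (mHash m Δ l))
    (hlt : LSeg.lt ((x, b), L') ((p, b + 2), .ge0)) : LSeg.le ((x, b), L') ((-b, b), L) := by
  cases L' with
  | le0 =>
    cases L with
    | le0 => exact le_centered_of_mem_smap hΛ' rfl
    | _ => exact LSeg.le_of_idx_lt (by decide)
  | eq0 =>
    obtain rfl : x = -b := by
      have : x + b = 0 := centered_of_mem_smap hΛ' rfl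
      omega
    cases L with
    | le0 => exact absurd hΛ' (eq0_notMem_smap_mHash hseq hj1 hjl hΔj hΔj1 hp hb)
    | eq0 => exact LSeg.le_refl _
    | ge0 => exact LSeg.le_of_idx_lt (by decide)
  | ge0 =>
    have hbx : 0 ≤ x + b := center_nonneg_of_mem_smap hΛ' rfl
    have hxp : x < p := by
      have := (LSeg.ge0_le_iff.1 hlt.1).2
      simp only [Seg.le] at this
      omega
    have hmem := fst_mem_of_mem_smap hΛ'
    have hL : L ≠ .le0 := by
      rintro rfl
      have := beg_eq_of_label_le0 hseq hj1 hjl hΔj hΔj1 hp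
      omega
    rcases (show -b ≤ x by omega).eq_or_lt with rfl | hbx'
    · cases L with
      | le0 => exact absurd rfl hL
      | eq0 => exact absurd hmem (centered_notMem_mHash hseq hj1 hjl hΔj hΔj1 hxp hb)
      | ge0 => exact LSeg.le_refl _
    · exact absurd hmem (notMem_mHash_of_beg_between hwf hsymm hseq hj1 hjl hΔj hΔj1 hL hbx' hxp)

end CenteredSuccessor

theorem stmt1_general (m : Multiset Seg) (ε : Seg → ℤ) (hgood : GoodInput m ε)
    (Δ : ℕ → LSeg) (l : ℕ) (hseq : IsInitSeq m ε Δ l)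
    (Δ' : ℕ → LSeg) (l' : ℕ)
    (hseq' : IsInitSeq (mHash m Δ l) (epsHash m ε Δ l) Δ' l')
    (hE : (Δ 1).1.2 = (Δ' 1).1.2)
    (j : ℕ) (hj1 : 1 ≤ j) (hjl : j < l) (hjl' : j < l')
    (hlt : LSeg.lt (Δ' (j + 1)) (Δ j))
    (hcj : (Δ j).1.1 + (Δ j).1.2 ≠ 0)
    (hcj1 : (Δ (j + 1)).1.1 + (Δ (j + 1)).1.2 = 0) :
    LSeg.le (Δ' (j + 1)) (Δ (j + 1)) := by
  set b := (Δ (j + 1)).1.2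
  have hend : (Δ j).1.2 = b + 2 := by have := (hseq.succ j hj1 hjl).2.1; omega
  have hend' : (Δ' (j + 1)).1.2 = b := by
    have := hseq.end_eq (k := j + 1) (by omega) hjl
    have := hseq'.end_eq (k := j + 1) (by omega) hjl'
    omega
  have hΔj : Δ j = (((Δ j).1.1, b + 2), (Δ j).2) := Prod.ext (Prod.ext rfl hend) rfl
  have hΔj1 : Δ (j + 1) = ((-b, b), (Δ (j + 1)).2) :=
    Prod.ext (Prod.ext (show _ = -b by omega) rfl) rfl
  have hΔ' : Δ' (j + 1) = (((Δ' (j + 1)).1.1, b), (Δ' (j + 1)).2) :=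
    Prod.ext (Prod.ext rfl hend') rfl
  have hmem' := hseq'.mem (j + 1) (by omega) hjl'
  have hforced := (centered_or_forced_of_mem_smap (hseq.mem j hj1 hjl.le)).resolve_left hcj
  have hwf := hgood.wf _ (fst_mem_of_mem_smap (hseq.mem j hj1 hjl.le))
  have hwf1 := hgood.wf _ (fst_mem_of_mem_smap (hseq.mem (j + 1) (by omega) hjl))
  simp only [forcedLabel, Seg.WF] at hforced hwf hwf1
  split_ifs at hforced with hpos
  · rw [hforced] at hΔj
    rw [hΔj, hΔ'] at hlt
    rw [hΔ', hΔj1]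
    exact le_next_of_lt_of_ge0 hgood.wf hgood.symm hseq hj1 hjl hΔj hΔj1 (by omega) (by omega)
      (hΔ' ▸ hmem') hlt
  · have hlab := LSeg.label_eq_le0_of_le (hseq.succ j hj1 hjl).1.1 hforced
    rw [hΔj1, hlab, ← hend']
    exact le_centered_of_mem_smap hmem' (LSeg.label_eq_le0_of_le hlt.1 hforced)

/-- Lemma 6.0.2: with `Δ'` the initial sequence of `(𝔪#, ε#)`,
assume `e(Δ₁) = e(Δ'₁)`; if `1 ≤ j < l`, `j < l'`, `Δ'_{j+1} ≺ Δ_j`, `c(Δ_j) ≠ 0`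
and `c(Δ_{j+1}) = 0`, then `Δ'_{j+1} ⪯ Δ_{j+1}`. -/
theorem stmt1 (m : Multiset Seg) (ε : Seg → ℤ) (hgood : GoodInput m ε) (hne : m ≠ 0)
    (Δ : ℕ → LSeg) (l : ℕ) (hseq : IsInitSeq m ε Δ l)
    (Δ' : ℕ → LSeg) (l' : ℕ) (hne' : mHash m Δ l ≠ 0)
    (hseq' : IsInitSeq (mHash m Δ l) (epsHash m ε Δ l) Δ' l')
    (hE : (Δ 1).1.2 = (Δ' 1).1.2)
    (j : ℕ) (hj1 : 1 ≤ j) (hjl : j < l) (hjl' : j < l')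
    (hlt : LSeg.lt (Δ' (j + 1)) (Δ j))
    (hcj : (Δ j).1.1 + (Δ j).1.2 ≠ 0)
    (hcj1 : (Δ (j + 1)).1.1 + (Δ (j + 1)).1.2 = 0) :
    LSeg.le (Δ' (j + 1)) (Δ (j + 1)) :=
  stmt1_general m ε hgood Δ l hseq Δ' l' hseq' hE j hj1 hjl hjl' hlt hcj hcj1

end AZ
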